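/- If E is a horizontal self-affine carpet, then every vertical slice of E is porous with constant min{δ,1}/4: for every y₁ ∈ ℝ, every z₂ ∈ V_{y₁}(E), and every t > 0 there exists x₂ ∈ ℝ such that the interval (x₂ − min{δ,1}t/4, x₂ + min{δ,1}t/4) is contained in (z₂ − t, z₂ + t) \ V_{y₁}(E). -/

import Mathlib

open Set Metric Filter Topology

noncomputable section

/-- The Euclidean plane ℝ². -/
abbrev E2 := EuclideanSpace ℝ (Fin 2)

/-- The vertical line {a} × ℝ in ℝ². -/
def vline (a : ℝ) : Set E2 := {x | x 0 = a}

/-- A horizontal self-affine carpet: an IFS of invertible diagonal affine maps on ℝ²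
satisfying (H1), together with its attractor `E` of diameter 1, satisfying the strong
separation condition and the vertical line condition (H2). -/
structure HorizontalCarpet where
  N : ℕ
  hN : 2 ≤ N
  a1 : Fin N → ℝ
  a2 : Fin N → ℝ
  b1 : Fin N → ℝ
  b2 : Fin N → ℝ
  φ : Fin N → E2 → E2
  hφ : ∀ i x, φ i x = ![a1 i * x 0 + b1 i, a2 i * x 1 + b2 i]
  hH1 : ∀ i, 0 < a2 i ∧ a2 i < a1 i ∧ a1 i < 1
  E : Set E2
  hne : E.Nonempty
  hcomp : IsCompact E
  hinv : E = ⋃ i, φ i '' E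
  hdiam : Metric.diam E = 1
  hssc : ∀ i j, i ≠ j → Disjoint (φ i '' E) (φ j '' E)
  hH2 : ∀ a : ℝ, (vline a ∩ convexHull ℝ E).Nonempty →
    ∃ i j : Fin N, i ≠ j ∧ (vline a ∩ φ i '' (convexHull ℝ E)).Nonempty ∧
      (vline a ∩ φ j '' (convexHull ℝ E)).Nonempty

/-- `η : [0,∞) → [0,∞)` is a homeomorphism (expressed for a function `η : ℝ → ℝ`). -/
def IsHomeoOfIci (η : ℝ → ℝ) : Prop :=
  ∃ e : (Set.Ici (0:ℝ)) ≃ₜ (Set.Ici (0:ℝ)), ∀ x : Set.Ici (0:ℝ), (e x : ℝ) = η x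

/-- `f` is η-quasisymmetric. -/
def IsQuasisymmetric {X Y : Type*} [MetricSpace X] [MetricSpace Y] (η : ℝ → ℝ)
    (f : X → Y) : Prop :=
  ∀ x y z : X, x ≠ z →
    dist (f x) (f y) / dist (f x) (f z) ≤ η (dist x y / dist x z)

/-- `δ = min_{i ≠ j} dist(φ_i(E), φ_j(E))`. -/
def sscGap (c : HorizontalCarpet) : ℝ :=
  sInf {d : ℝ | ∃ i j : Fin c.N, i ≠ j ∧
    ∃ x ∈ c.φ i '' c.E, ∃ y ∈ c.φ j '' c.E, d = dist x y}

/-- The vertical slice `V_{y₁}(E) = {x₂ : (y₁,x₂) ∈ E}`. -/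
def vslice (E : Set E2) (y1 : ℝ) : Set ℝ := {x2 : ℝ | (!₂[y1, x2] : E2) ∈ E}

/-!
Call `C ⊆ E` a separated cell at scale `r` if its vertical extent is at most `r` and every point
of `E \ C` is at distance at least `δ r` from `C`. `E` is one at every scale `r ≥ 1`, and `φ_i`
maps a cell at scale `r` to a cell at scale `a₂(i) r` as long as `a₂(i) r ≤ 1`: points of `φ_i(E)`
outside `φ_i(C)` stay `a₂(i) δ r` away because `φ_i` multiplies distances by at least `a₂(i)`
(H1), and points of the other pieces are `δ` away by strong separation. Hence every point
of `E` lies in cells of all scales. Above the top of the slice of a cell of scale `t/2` around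
`(y₁, z₂)` the slice of `E` then has a gap of length `min{δ,1} t/2` inside `(z₂ - t, z₂ + t)`.
-/

lemma exists_Ioo_subset_Ioo_diff_of_forall_le_abs_sub {V W : Set ℝ} {z b g : ℝ} (hzW : z ∈ W)
    (hWb : ∀ p ∈ W, p ≤ b) (hsep : ∀ q ∈ V \ W, ∀ p ∈ W, g ≤ |q - p|) :
    ∃ x, Ioo (x - g / 2) (x + g / 2) ⊆ Ioo z (b + g) \ V := by
  have hbdd : BddAbove W := ⟨b, hWb⟩
  have hzs : z ≤ sSup W := le_csSup hbdd hzW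
  have hsb : sSup W ≤ b := csSup_le ⟨z, hzW⟩ hWb
  refine ⟨sSup W + g / 2, fun q hq => ?_⟩
  obtain ⟨hsq, hqg⟩ : sSup W < q ∧ q < sSup W + g := by
    constructor <;> linarith [hq.1, hq.2]
  refine ⟨⟨hzs.trans_lt hsq, by linarith⟩, fun hqV => ?_⟩
  have hqW : q ∉ W := fun h => (le_csSup hbdd h).not_gt hsq
  obtain ⟨p, hpW, hqp⟩ := exists_lt_of_lt_csSup ⟨z, hzW⟩ (show q - g < sSup W by linarith)
  have hps : p < q := (le_csSup hbdd hpW).trans_lt hsq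
  have := hsep q ⟨hqV, hqW⟩ p hpW
  rw [abs_of_pos (sub_pos.2 hps)] at this
  linarith

lemma EuclideanSpace.dist_pair_same_fst (a b b' : ℝ) :
    dist (!₂[a, b] : EuclideanSpace ℝ (Fin 2)) !₂[a, b'] = |b - b'| := by
  simp [EuclideanSpace.dist_eq, Fin.sum_univ_two, Real.dist_eq, Real.sqrt_sq_eq_abs]

namespace HorizontalCarpet

variable (c : HorizontalCarpet)

lemma φ_apply_zero (i : Fin c.N) (u : E2) : c.φ i u 0 = c.a1 i * u 0 + c.b1 i := by
  simp [c.hφ]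

lemma φ_apply_one (i : Fin c.N) (u : E2) : c.φ i u 1 = c.a2 i * u 1 + c.b2 i := by
  simp [c.hφ]

lemma a2_mul_dist_le_dist_φ (i : Fin c.N) (u v : E2) :
    c.a2 i * dist u v ≤ dist (c.φ i u) (c.φ i v) := by
  obtain ⟨ha2, ha21, -⟩ := c.hH1 i
  rw [EuclideanSpace.dist_eq, EuclideanSpace.dist_eq, ← Real.sqrt_sq ha2.le,
    ← Real.sqrt_mul (sq_nonneg _)]
  gcongr
  simp only [Fin.sum_univ_two, Real.dist_eq, sq_abs, φ_apply_zero, φ_apply_one]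
  have : c.a2 i ^ 2 ≤ c.a1 i ^ 2 := by gcongr
  nlinarith [sq_nonneg (u 0 - v 0), sq_nonneg (u 1 - v 1)]

lemma image_φ_subset (i : Fin c.N) : c.φ i '' c.E ⊆ c.E := by
  conv_rhs => rw [c.hinv]
  exact subset_iUnion (fun j => c.φ j '' c.E) i

lemma exists_mem_image_φ {z : E2} (hz : z ∈ c.E) : ∃ i, z ∈ c.φ i '' c.E := by
  rw [c.hinv] at hz
  exact mem_iUnion.1 hz

lemma abs_sub_le_one {u v : E2} (hu : u ∈ c.E) (hv : v ∈ c.E) : |u 1 - v 1| ≤ 1 := by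
  rw [← c.hdiam, ← Real.dist_eq]
  exact (PiLp.dist_apply_le u v 1).trans (dist_le_diam_of_mem c.hcomp.isBounded hu hv)

lemma exists_forall_a2_le : ∃ ρ ∈ Ioo (0 : ℝ) 1, ∀ i, c.a2 i ≤ ρ := by
  have : Nonempty (Fin c.N) := ⟨⟨0, by linarith [c.hN]⟩⟩
  obtain ⟨i, hi⟩ := Finite.exists_max c.a2
  exact ⟨c.a2 i, ⟨(c.hH1 i).1, (c.hH1 i).2.1.trans (c.hH1 i).2.2⟩, hi⟩

lemma sscGap_nonneg : 0 ≤ sscGap c := by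
  refine Real.sInf_nonneg ?_
  rintro _ ⟨_, _, _, _, _, _, _, rfl⟩
  exact dist_nonneg

lemma sscGap_le_dist {i j : Fin c.N} (hij : i ≠ j) {x y : E2} (hx : x ∈ c.φ i '' c.E)
    (hy : y ∈ c.φ j '' c.E) : sscGap c ≤ dist x y := by
  refine csInf_le ⟨0, ?_⟩ ⟨i, j, hij, x, hx, y, hy, rfl⟩
  rintro _ ⟨_, _, _, _, _, _, _, rfl⟩
  exact dist_nonneg

structure IsSeparatedCell (r : ℝ) (C : Set E2) : Prop where
  subset : C ⊆ c.E
  abs_sub_le : ∀ u ∈ C, ∀ v ∈ C, |u 1 - v 1| ≤ r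
  le_dist : ∀ q ∈ c.E \ C, ∀ p ∈ C, sscGap c * r ≤ dist q p

variable {c}

lemma isSeparatedCell_E {r : ℝ} (hr : 1 ≤ r) : c.IsSeparatedCell r c.E where
  subset := subset_rfl
  abs_sub_le _ hu _ hv := (c.abs_sub_le_one hu hv).trans hr
  le_dist _ hq _ _ := absurd hq.1 hq.2

lemma IsSeparatedCell.image_φ {r : ℝ} {C : Set E2} (hC : c.IsSeparatedCell r C) (i : Fin c.N)
    (hr : c.a2 i * r ≤ 1) : c.IsSeparatedCell (c.a2 i * r) (c.φ i '' C) where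
  subset := (image_mono hC.subset).trans (c.image_φ_subset i)
  abs_sub_le := by
    rintro _ ⟨u, hu, rfl⟩ _ ⟨v, hv, rfl⟩
    rw [φ_apply_one, φ_apply_one, add_sub_add_right_eq_sub, ← mul_sub, abs_mul,
      abs_of_pos (c.hH1 i).1]
    exact mul_le_mul_of_nonneg_left (hC.abs_sub_le u hu v hv) (c.hH1 i).1.le
  le_dist := by
    rintro q ⟨hqE, hqC⟩ _ ⟨p, hp, rfl⟩
    by_cases hqi : q ∈ c.φ i '' c.E
    · obtain ⟨q, hq, rfl⟩ := hqi
      have hqC : q ∉ C := fun h => hqC (mem_image_of_mem _ h)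
      calc sscGap c * (c.a2 i * r) = c.a2 i * (sscGap c * r) := by ring
        _ ≤ c.a2 i * dist q p :=
          mul_le_mul_of_nonneg_left (hC.le_dist q ⟨hq, hqC⟩ p hp) (c.hH1 i).1.le
        _ ≤ dist (c.φ i q) (c.φ i p) := c.a2_mul_dist_le_dist_φ i q p
    · obtain ⟨j, hqj⟩ := c.exists_mem_image_φ hqE
      have hji : j ≠ i := by rintro rfl; exact hqi hqj
      calc sscGap c * (c.a2 i * r) ≤ sscGap c * 1 :=
          mul_le_mul_of_nonneg_left hr c.sscGap_nonneg
        _ = sscGap c := mul_one _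
        _ ≤ dist q (c.φ i p) := c.sscGap_le_dist hji hqj (mem_image_of_mem _ (hC.subset hp))

lemma exists_isSeparatedCell {z : E2} (hz : z ∈ c.E) {r : ℝ} (hr : 0 < r) :
    ∃ C, z ∈ C ∧ c.IsSeparatedCell r C := by
  obtain ⟨ρ, ⟨hρ0, hρ1⟩, hρ⟩ := c.exists_forall_a2_le
  obtain ⟨k, hk⟩ := exists_pow_lt_of_lt_one hr hρ1
  induction k generalizing z r with
  | zero => exact ⟨c.E, hz, isSeparatedCell_E (by simpa using hk.le)⟩
  | succ k ih =>
    rcases le_or_gt 1 r with h1r | hr1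
    · exact ⟨c.E, hz, isSeparatedCell_E h1r⟩
    obtain ⟨i, w, hw, rfl⟩ := c.exists_mem_image_φ hz
    have ha2 := (c.hH1 i).1
    have hk' : ρ ^ k < r / c.a2 i := by
      rw [lt_div_iff₀ ha2]
      calc ρ ^ k * c.a2 i ≤ ρ ^ k * ρ := mul_le_mul_of_nonneg_left (hρ i) (pow_nonneg hρ0.le k)
        _ = ρ ^ (k + 1) := (pow_succ ρ k).symm
        _ < r := hk
    obtain ⟨C, hwC, hC⟩ := ih hw (div_pos hr ha2) hk'
    have hr' : c.a2 i * (r / c.a2 i) = r := mul_div_cancel₀ r ha2.ne'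
    have hC' := hC.image_φ i (by rw [hr']; exact hr1.le)
    rw [hr'] at hC'
    exact ⟨c.φ i '' C, mem_image_of_mem _ hwC, hC'⟩

end HorizontalCarpet

open HorizontalCarpet in
/-- Lemma 5.4 (porosity part): every vertical slice of a horizontal self-affine carpet
is porous with constant `min{δ,1}/4`. -/
theorem statement11 (c : HorizontalCarpet) (y1 z2 : ℝ) (hz : z2 ∈ vslice c.E y1)
    (t : ℝ) (ht : 0 < t) :
    ∃ x2 : ℝ, Set.Ioo (x2 - min (sscGap c) 1 * t / 4) (x2 + min (sscGap c) 1 * t / 4) ⊆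
      Set.Ioo (z2 - t) (z2 + t) \ vslice c.E y1 := by
  obtain ⟨C, hzC, hC⟩ := exists_isSeparatedCell hz (half_pos ht)
  have hδ := min_le_left (sscGap c) 1
  have hone := min_le_right (sscGap c) 1
  obtain ⟨x2, hx2⟩ := exists_Ioo_subset_Ioo_diff_of_forall_le_abs_sub (V := vslice c.E y1)
    (W := vslice C y1) (b := z2 + t / 2) (g := min (sscGap c) 1 * t / 2) hzC
    (fun p hp => by
      have := hC.abs_sub_le _ hp _ hzC
      simp only [Matrix.cons_val_one, Matrix.cons_val_fin_one] at this
      linarith [le_abs_self (p - z2)])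
    (fun q hq p hp => by
      have := hC.le_dist _ hq _ hp
      rw [EuclideanSpace.dist_pair_same_fst] at this
      nlinarith)
  refine ⟨x2, fun q hq => ?_⟩
  obtain ⟨⟨hq1, hq2⟩, hqV⟩ := hx2 (a := q) (by constructor <;> linarith [hq.1, hq.2])
  exact ⟨⟨by linarith, by nlinarith⟩, hqV⟩
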